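/- Let h, w ∈ ℕ, let k₁, k₂ be multiples of w with (k₁+k₂)/w ≤ h, and let B₁, B₂ ∈ ℕ. If Ω₁ ∈ 𝕄_{k₁,B₁} and Ω₂ ∈ 𝕄_{k₂,B₂} (supports in the same h×w grid), then Ω₁ ∪ Ω₂ ∈ 𝕄⁺_{k₁+k₂, B₁+B₂}; that is, there exists a support Γ ⊇ Ω₁ ∪ Ω₂ with exactly (k₁+k₂)/w entries in every column and EMD(Γ) ≤ B₁ + B₂. -/

import Mathlib

/-- The Earth Mover's Distance between two finite sets of naturals of equal
cardinality: the minimum, over bijections `π` from `A` onto `B`, of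
`∑ a ∈ A, |a - π a|`. -/
noncomputable def natEMD (A B : Finset ℕ) : ℕ :=
  sInf { d : ℕ | ∃ π : ℕ → ℕ, Set.BijOn π ↑A ↑B ∧
    d = ∑ a ∈ A, ((a : ℤ) - (π a : ℤ)).natAbs }

/-- The support of column `c` of a matrix support `Ω`: the set of rows `r`
with `(r, c) ∈ Ω`. -/
def colSupp {h w : ℕ} (Ω : Finset (Fin h × Fin w)) (c : ℕ) : Finset ℕ :=
  (Ω.filter (fun q => (q.2 : ℕ) = c)).image (fun q => (q.1 : ℕ))

/-- The support-EMD of a matrix support `Ω` (with exactly `s` entries per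
column): the sum of the EMDs of consecutive column supports. -/
noncomputable def suppEMD {h w : ℕ} (Ω : Finset (Fin h × Fin w)) : ℕ :=
  ∑ c ∈ Finset.range (w - 1), natEMD (colSupp Ω c) (colSupp Ω (c + 1))

/-- The Constrained EMD model `𝕄_{k,B}` with column sparsity `s = k/w` and
EMD budget `B`: supports in the `h × w` grid with exactly `s` entries per
column and support-EMD at most `B`. -/
noncomputable def cemdModel (h w s B : ℕ) : Set (Finset (Fin h × Fin w)) :=
  { Ω | (∀ c < w, (colSupp Ω c).card = s) ∧ suppEMD Ω ≤ B }

/-!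
Column by column, the EMD of two equal-size sets in `range h` is the `ℓ¹` distance of their
counting functions `t ↦ #{a ∈ A | a < t}` (match the sorted elements). Adding the counting
functions of the columns of `Ω₁` and `Ω₂` gives counting functions `K c` of multisets of size
`s₁ + s₂` whose consecutive distances sum to at most `B₁ + B₂`. It remains to replace each `K c` by
the counting function of a genuine set containing the support of `K c` without increasing that sum.
Walking along the columns, the next set is chosen pointwise between the previous set and the next
multiset, so by the triangle inequality the chain cost plus the distance to the last multiset is at
most the distance from the first set to the first multiset plus the multiset cost. Starting at the
end whose multiset admits the closer covering set makes the boundary terms cancel.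
-/
open Finset

namespace SupportEMD

def countBelow (A : Finset ℕ) (t : ℕ) : ℕ := #{a ∈ A | a < t}

def cdfDist (h : ℕ) (f g : ℕ → ℕ) : ℕ := ∑ t ∈ range (h + 1), ((f t : ℤ) - g t).natAbs

section countBelow

variable {A : Finset ℕ} {h t : ℕ}

@[simp] lemma countBelow_zero (A : Finset ℕ) : countBelow A 0 = 0 := by simp [countBelow]

lemma countBelow_eq_sum (A : Finset ℕ) (t : ℕ) :
    countBelow A t = ∑ a ∈ A, if a < t then 1 else 0 :=
  card_filter _ _

lemma countBelow_mono (A : Finset ℕ) : Monotone (countBelow A) := fun _ _ hst =>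
  card_le_card fun a ha => by
    simp only [mem_filter] at ha ⊢
    exact ⟨ha.1, ha.2.trans_le hst⟩

lemma countBelow_le_card (A : Finset ℕ) (t : ℕ) : countBelow A t ≤ #A := card_filter_le _ _

lemma countBelow_of_forall_lt (hA : ∀ a ∈ A, a < t) : countBelow A t = #A := by
  rw [countBelow, filter_true_of_mem hA]

lemma countBelow_of_subset_range (hA : A ⊆ range h) (ht : h ≤ t) : countBelow A t = #A :=
  countBelow_of_forall_lt fun _ ha => (mem_range.1 (hA ha)).trans_le ht

lemma countBelow_insert {a : ℕ} (ha : a ∉ A) (t : ℕ) :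
    countBelow (insert a A) t = countBelow A t + if a < t then 1 else 0 := by
  rw [countBelow_eq_sum, sum_insert ha, countBelow_eq_sum, add_comm]

lemma countBelow_succ (A : Finset ℕ) (t : ℕ) :
    countBelow A (t + 1) = countBelow A t + if t ∈ A then 1 else 0 := by
  rw [countBelow_eq_sum, countBelow_eq_sum, ← sum_ite_eq' A t fun _ => 1, ← sum_add_distrib]
  exact sum_congr rfl fun _ _ => by split_ifs <;> omega

lemma countBelow_lt_succ_of_mem (ht : t ∈ A) : countBelow A t < countBelow A (t + 1) := by
  simp [countBelow_succ, ht]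

end countBelow

section cdfDist

variable {h : ℕ}

lemma cdfDist_comm (f g : ℕ → ℕ) : cdfDist h f g = cdfDist h g f :=
  sum_congr rfl fun _ _ => by omega

lemma cdfDist_triangle (f g k : ℕ → ℕ) : cdfDist h f k ≤ cdfDist h f g + cdfDist h g k := by
  rw [cdfDist, cdfDist, cdfDist, ← sum_add_distrib]
  exact sum_le_sum fun _ _ => by omega

lemma cdfDist_add_cdfDist_of_between {f g k : ℕ → ℕ}
    (hg : ∀ t ≤ h, min (f t) (k t) ≤ g t ∧ g t ≤ max (f t) (k t)) :
    cdfDist h f g + cdfDist h g k = cdfDist h f k := by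
  rw [cdfDist, cdfDist, cdfDist, ← sum_add_distrib]
  exact sum_congr rfl fun t ht => by have := hg t (Nat.lt_succ_iff.1 (mem_range.1 ht)); omega

lemma cdfDist_add_le (f₁ f₂ g₁ g₂ : ℕ → ℕ) :
    cdfDist h (f₁ + f₂) (g₁ + g₂) ≤ cdfDist h f₁ g₁ + cdfDist h f₂ g₂ := by
  rw [cdfDist, cdfDist, cdfDist, ← sum_add_distrib]
  exact sum_le_sum fun _ _ => by simp only [Pi.add_apply]; omega

lemma cdfDist_congr {f f' g g' : ℕ → ℕ} (hf : ∀ t ≤ h, f t = f' t) (hg : ∀ t ≤ h, g t = g' t) :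
    cdfDist h f g = cdfDist h f' g' :=
  sum_congr rfl fun t ht => by
    have ht := Nat.lt_succ_iff.1 (mem_range.1 ht)
    rw [hf t ht, hg t ht]

lemma sum_cdfDist_reflect (F : ℕ → ℕ → ℕ) (m : ℕ) :
    ∑ c ∈ range m, cdfDist h (F (m - c)) (F (m - (c + 1)))
      = ∑ c ∈ range m, cdfDist h (F c) (F (c + 1)) := by
  rw [← sum_range_reflect]
  refine sum_congr rfl fun c hc => ?_
  have hc := mem_range.1 hc
  rw [cdfDist_comm, show m - (m - 1 - c) = c + 1 by omega, show m - (m - 1 - c + 1) = c by omega]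

end cdfDist

lemma sum_natAbs_ite_lt_sub_ite_lt {h a b : ℕ} (ha : a ≤ h) (hb : b ≤ h) :
    ∑ t ∈ range (h + 1), ((if a < t then (1 : ℤ) else 0) - if b < t then 1 else 0).natAbs
      = ((a : ℤ) - b).natAbs := by
  have hterm : ∀ t ∈ range (h + 1),
      ((if a < t then (1 : ℤ) else 0) - if b < t then 1 else 0).natAbs
        = if t ∈ Ioc (min a b) (max a b) then 1 else 0 := fun t _ => by
    simp only [mem_Ioc]; split_ifs <;> omega
  have hIoc : {t ∈ range (h + 1) | t ∈ Ioc (min a b) (max a b)} = Ioc (min a b) (max a b) := by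
    ext t; simp only [mem_filter, mem_range, mem_Ioc]; omega
  rw [sum_congr rfl hterm, sum_boole, hIoc, Nat.card_Ioc, Nat.cast_id]
  omega

lemma cdfDist_le_cost {h : ℕ} {A B : Finset ℕ} {π : ℕ → ℕ} (hA : A ⊆ range h)
    (hB : B ⊆ range h) (hπ : Set.BijOn π A B) :
    cdfDist h (countBelow A) (countBelow B) ≤ ∑ a ∈ A, ((a : ℤ) - π a).natAbs := by
  have hcast : ∀ (C : Finset ℕ) t, (countBelow C t : ℤ) = ∑ c ∈ C, if c < t then 1 else 0 :=
    fun C t => by push_cast [countBelow_eq_sum]; rfl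
  have hB_eq : ∀ t, (countBelow B t : ℤ) = ∑ a ∈ A, if π a < t then 1 else 0 := fun t =>
    (hcast B t).trans (sum_nbij π hπ.mapsTo hπ.injOn hπ.surjOn fun _ _ => rfl).symm
  calc cdfDist h (countBelow A) (countBelow B)
      = ∑ t ∈ range (h + 1),
          (∑ a ∈ A, ((if a < t then (1 : ℤ) else 0) - if π a < t then 1 else 0)).natAbs := by
        simp only [cdfDist, hcast A, hB_eq, sum_sub_distrib]
    _ ≤ ∑ t ∈ range (h + 1), ∑ a ∈ A,
          ((if a < t then (1 : ℤ) else 0) - if π a < t then 1 else 0).natAbs :=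
        sum_le_sum fun t _ => Int.natAbs_sum_le _ _
    _ = ∑ a ∈ A, ((a : ℤ) - π a).natAbs := by
        rw [sum_comm]
        exact sum_congr rfl fun a ha => sum_natAbs_ite_lt_sub_ite_lt
          (mem_range.1 (hA ha)).le (mem_range.1 (hB (hπ.mapsTo ha))).le

/-- Below a threshold that `a` (resp. `b`) lies under, all of `A` (resp. `B`) is counted too, so the
two contributions to `cdfDist` never have opposite signs. -/
lemma cdfDist_insert_insert {h a b : ℕ} {A B : Finset ℕ} (hA : ∀ x ∈ A, x < a)
    (hB : ∀ y ∈ B, y < b) (hAB : #A = #B) (ha : a ≤ h) (hb : b ≤ h) :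
    cdfDist h (countBelow (insert a A)) (countBelow (insert b B))
      = ((a : ℤ) - b).natAbs + cdfDist h (countBelow A) (countBelow B) := by
  rw [cdfDist, cdfDist, ← sum_natAbs_ite_lt_sub_ite_lt ha hb, ← sum_add_distrib]
  refine sum_congr rfl fun t _ => ?_
  rw [countBelow_insert (fun h => (hA a h).false), countBelow_insert (fun h => (hB b h).false)]
  have hA' := countBelow_le_card A t
  have hB' := countBelow_le_card B t
  split_ifs with hat hbt hbt
  · rw [countBelow_of_forall_lt fun x hx => (hA x hx).trans hat,
      countBelow_of_forall_lt fun y hy => (hB y hy).trans hbt, hAB]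
    simp
  · rw [countBelow_of_forall_lt fun x hx => (hA x hx).trans hat] at hA' ⊢
    push_cast; omega
  · rw [countBelow_of_forall_lt fun y hy => (hB y hy).trans hbt] at hB' ⊢
    push_cast; omega
  · simp

lemma exists_bijOn_cost_eq_cdfDist {h : ℕ} {A B : Finset ℕ} (hA : A ⊆ range h)
    (hB : B ⊆ range h) (hAB : #A = #B) :
    ∃ π : ℕ → ℕ, Set.BijOn π A B ∧
      ∑ a ∈ A, ((a : ℤ) - π a).natAbs = cdfDist h (countBelow A) (countBelow B) := by
  induction A using Finset.induction_on_max generalizing B with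
  | empty =>
    obtain rfl : B = ∅ := card_eq_zero.1 hAB.symm
    exact ⟨id, by simp, by simp [cdfDist]⟩
  | insert a A hlt ih =>
    have haA : a ∉ A := fun h => (hlt a h).false
    have hne : B.Nonempty := card_pos.1 (by rw [← hAB, card_insert_of_notMem haA]; omega)
    set b := B.max' hne
    have hb : b ∈ B := max'_mem _ _
    obtain ⟨π, hπ, hcost⟩ := ih (B := B.erase b) (fun x hx => hA (mem_insert_of_mem hx))
      (fun y hy => hB (mem_of_mem_erase hy))
      (by rw [card_erase_of_mem hb, ← hAB, card_insert_of_notMem haA, Nat.add_sub_cancel])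
    have hupd : ∀ x ∈ A, Function.update π a b x = π x := fun x hx =>
      Function.update_of_ne (by rintro rfl; exact haA hx) _ _
    refine ⟨Function.update π a b, ?_, ?_⟩
    · have := (hπ.congr fun x hx => (hupd x hx).symm).insert (a := a) (by simp)
      rwa [Function.update_self, ← coe_insert b, insert_erase hb, ← coe_insert] at this
    · rw [sum_insert haA, Function.update_self, sum_congr rfl fun x hx => by rw [hupd x hx], hcost]
      conv_rhs => rw [← insert_erase hb]
      rw [cdfDist_insert_insert hlt (fun y hy => B.lt_max'_of_mem_erase_max' hne hy)
        (by rw [card_erase_of_mem hb, ← hAB, card_insert_of_notMem haA, Nat.add_sub_cancel])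
        (mem_range.1 (hA (mem_insert_self a A))).le (mem_range.1 (hB hb)).le]

theorem natEMD_eq_cdfDist {h : ℕ} {A B : Finset ℕ} (hA : A ⊆ range h) (hB : B ⊆ range h)
    (hAB : #A = #B) : natEMD A B = cdfDist h (countBelow A) (countBelow B) := by
  obtain ⟨π, hπ, hcost⟩ := exists_bijOn_cost_eq_cdfDist hA hB hAB
  refine le_antisymm (hcost ▸ Nat.sInf_le ⟨π, hπ, rfl⟩) ?_
  obtain ⟨π₀, hπ₀, hEMD⟩ := Nat.sInf_mem (⟨_, π, hπ, rfl⟩ : { d : ℕ | ∃ π : ℕ → ℕ,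
    Set.BijOn π ↑A ↑B ∧ d = ∑ a ∈ A, ((a : ℤ) - (π a : ℤ)).natAbs }.Nonempty)
  rw [natEMD, hEMD]
  exact cdfDist_le_cost hA hB hπ₀

/-- Satisfied by the counting function `countBelow X + countBelow Y` of an `s`-element multiset
in `range h`. -/
def IsCDF (h s : ℕ) (K : ℕ → ℕ) : Prop := Monotone K ∧ K h = s

/-- `H` counts the elements below `t` of an `s`-element subset of `range h` containing every
row at which `K` increases. -/
def IsCoveringSetCDF (h s : ℕ) (K H : ℕ → ℕ) : Prop :=
  H 0 = 0 ∧ H h = s ∧ ∀ t < h, H (t + 1) = H t + 1 ∨ (H (t + 1) = H t ∧ K (t + 1) ≤ K t)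

def jumpCount (K : ℕ → ℕ) (t : ℕ) : ℕ := #{u ∈ range t | K u < K (u + 1)}

/-- Largest value forced at `t` by the lower bounds `m a` at later rows `a ≤ h`, given that a
set CDF grows by at most one per row. -/
def lowerBarrier (h : ℕ) (m : ℕ → ℕ) (t : ℕ) : ℕ := (Icc t h).sup fun a => m a - (a - t)

def greedyPath (lo K : ℕ → ℕ) : ℕ → ℕ
  | 0 => 0
  | t + 1 => max (lo (t + 1)) (greedyPath lo K t + if K t < K (t + 1) then 1 else 0)

lemma le_add_sub_of_succ_le_add_one {f : ℕ → ℕ} {n a b : ℕ}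
    (hf : ∀ t < n, f (t + 1) ≤ f t + 1) (hab : a ≤ b) (hbn : b ≤ n) : f b ≤ f a + (b - a) := by
  induction b, hab using Nat.le_induction with
  | base => simp
  | succ b hab ih => have := hf b (by omega); have := ih (by omega); omega

section jumpCount

variable {K : ℕ → ℕ} {a b : ℕ}

lemma jumpCount_succ (K : ℕ → ℕ) (t : ℕ) :
    jumpCount K (t + 1) = jumpCount K t + if K t < K (t + 1) then 1 else 0 := by
  rw [jumpCount, range_add_one, filter_insert]
  split_ifs <;> simp [card_insert_of_notMem, jumpCount]

lemma jumpCount_le_add_sub (hab : a ≤ b) : jumpCount K b ≤ jumpCount K a + (b - a) :=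
  le_add_sub_of_succ_le_add_one (n := b) (fun t _ => by rw [jumpCount_succ]; split_ifs <;> omega)
    hab le_rfl

lemma add_jumpCount_le (hK : Monotone K) (hab : a ≤ b) :
    K a + jumpCount K b ≤ K b + jumpCount K a := by
  induction b, hab using Nat.le_induction with
  | base => rfl
  | succ b hab ih =>
    rw [jumpCount_succ]
    have : K b ≤ K (b + 1) := hK (by omega)
    split_ifs <;> omega

end jumpCount

section lowerBarrier

variable {h t : ℕ} {m : ℕ → ℕ}

lemma le_lowerBarrier (ht : t ≤ h) : m t ≤ lowerBarrier h m t := by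
  simpa [lowerBarrier] using Finset.le_sup (f := fun a => m a - (a - t)) (mem_Icc.2 ⟨le_rfl, ht⟩)

lemma lowerBarrier_succ_le : lowerBarrier h m (t + 1) ≤ lowerBarrier h m t + 1 :=
  Finset.sup_le fun a ha => by
    have hat := mem_Icc.1 ha
    have := Finset.le_sup (f := fun a => m a - (a - t))
      (show a ∈ Icc t h from mem_Icc.2 ⟨by omega, hat.2⟩)
    simp only [lowerBarrier] at this ⊢
    omega

lemma lowerBarrier_zero (hm : ∀ a ≤ h, m a ≤ a) : lowerBarrier h m 0 = 0 :=
  Nat.eq_zero_of_le_zero <| Finset.sup_le fun a ha => by have := hm a (mem_Icc.1 ha).2; omega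

end lowerBarrier

section greedyPath

variable {lo K : ℕ → ℕ} {t : ℕ}

lemma lowerBarrier_le_greedyPath (h0 : lo 0 = 0) : lo t ≤ greedyPath lo K t := by
  cases t with
  | zero => simp [h0]
  | succ t => exact le_max_left _ _

lemma greedyPath_add_le_succ :
    greedyPath lo K t + (if K t < K (t + 1) then 1 else 0) ≤ greedyPath lo K (t + 1) :=
  le_max_right _ _

lemma greedyPath_succ_le (h0 : lo 0 = 0) (hlo : ∀ t, lo (t + 1) ≤ lo t + 1) :
    greedyPath lo K (t + 1) ≤ greedyPath lo K t + 1 :=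
  max_le ((hlo t).trans (by have := lowerBarrier_le_greedyPath (K := K) (t := t) h0; omega))
    (by split_ifs <;> omega)

end greedyPath

section Sandwich

variable {h s : ℕ} {K P : ℕ → ℕ}

/-- A lower bound imposed at `t` by a later row `a` leaves room for all jumps of `K` up to any
`b ≥ t`: if `a ≤ b` the multiset itself provides the room, otherwise the slope bound on `P`. -/
lemma lowerBarrier_add_jumpCount_le (hK : Monotone K) (hP : ∀ t < h, P (t + 1) ≤ P t + 1)
    {t b : ℕ} (htb : t ≤ b) (hbh : b ≤ h) :
    lowerBarrier h (fun a => min (K a) (P a)) t + jumpCount K b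
      ≤ max (K b) (P b) + jumpCount K t := by
  have key : ∀ a ∈ Icc t h,
      min (K a) (P a) - (a - t) + jumpCount K b ≤ max (K b) (P b) + jumpCount K t := by
    intro a ha
    obtain ⟨hta, hah⟩ := mem_Icc.1 ha
    have := add_jumpCount_le hK htb
    rcases le_total a b with hab | hba
    · have := add_jumpCount_le hK hab
      have := jumpCount_le_add_sub (K := K) hta
      omega
    · have := le_add_sub_of_succ_le_add_one hP hba hah
      have := jumpCount_le_add_sub (K := K) htb
      omega
  have hsup := Finset.sup_le (f := fun a => min (K a) (P a) - (a - t))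
    (a := max (K b) (P b) + jumpCount K t - jumpCount K b) fun a ha => by
      have := key a ha
      omega
  have := key t (mem_Icc.2 ⟨le_rfl, htb.trans hbh⟩)
  change (Icc t h).sup (fun a => min (K a) (P a) - (a - t)) + _ ≤ _
  omega

lemma greedyPath_add_jumpCount_le {lo M : ℕ → ℕ} (hK : Monotone K) (hKM : ∀ b ≤ h, K b ≤ M b)
    (hlo : ∀ t b, t ≤ b → b ≤ h → lo t + jumpCount K b ≤ M b + jumpCount K t)
    {t b : ℕ} (htb : t ≤ b) (hbh : b ≤ h) :
    greedyPath lo K t + jumpCount K b ≤ M b + jumpCount K t := by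
  induction t generalizing b with
  | zero =>
    have := add_jumpCount_le hK (Nat.zero_le b)
    have := hKM b hbh
    have : jumpCount K 0 = 0 := by simp [jumpCount]
    simp only [greedyPath]
    omega
  | succ t ih =>
    have := ih (b := b) (by omega) hbh
    have := hlo (t + 1) b htb hbh
    have := jumpCount_succ K t
    simp only [greedyPath]
    split_ifs at * <;> omega

theorem exists_isCoveringSetCDF_between (hK : IsCDF h s K) (hP0 : P 0 = 0) (hPh : P h = s)
    (hP : ∀ t < h, P (t + 1) ≤ P t + 1) :
    ∃ H, IsCoveringSetCDF h s K H ∧ ∀ t ≤ h, min (K t) (P t) ≤ H t ∧ H t ≤ max (K t) (P t) := by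
  obtain ⟨hKm, hKh⟩ := hK
  have hlo0 : lowerBarrier h (fun a => min (K a) (P a)) 0 = 0 := lowerBarrier_zero fun a ha => by
    have := le_add_sub_of_succ_le_add_one hP (Nat.zero_le a) ha
    omega
  set lo := lowerBarrier h fun a => min (K a) (P a)
  have hbetween : ∀ t ≤ h,
      min (K t) (P t) ≤ greedyPath lo K t ∧ greedyPath lo K t ≤ max (K t) (P t) := fun t ht =>
    ⟨(le_lowerBarrier ht).trans (lowerBarrier_le_greedyPath hlo0),
      by
        have := greedyPath_add_jumpCount_le (lo := lo) hKm (fun b _ => le_max_left (K b) (P b))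
          (fun t b => lowerBarrier_add_jumpCount_le hKm hP) le_rfl ht
        omega⟩
  refine ⟨greedyPath lo K, ⟨rfl, ?_, fun t ht => ?_⟩, hbetween⟩
  · have := hbetween h le_rfl
    rw [hKh, hPh] at this
    omega
  · have hup := greedyPath_add_le_succ (lo := lo) (K := K) (t := t)
    have hstep := greedyPath_succ_le (K := K) (t := t) hlo0 fun _ => lowerBarrier_succ_le
    have : K t ≤ K (t + 1) := hKm (by omega)
    split_ifs at hup <;> omega

end Sandwich

section Chain

variable {h s : ℕ} {K : ℕ → ℕ → ℕ}

lemma IsCoveringSetCDF.succ_le {K H : ℕ → ℕ} (hH : IsCoveringSetCDF h s K H) :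
    ∀ t < h, H (t + 1) ≤ H t + 1 := fun t ht => by
  rcases hH.2.2 t ht with h' | h' <;> omega

/-- Each step moves the current set CDF towards the next multiset CDF, as far as it gets without
overshooting, so that the distance to the multiset CDFs never grows. -/
lemma exists_chain_from {m : ℕ} {H₀ : ℕ → ℕ} (hK : ∀ c ≤ m, IsCDF h s (K c))
    (hH₀ : IsCoveringSetCDF h s (K 0) H₀) :
    ∃ Hs : ℕ → ℕ → ℕ, (∀ c ≤ m, IsCoveringSetCDF h s (K c) (Hs c)) ∧
      ∑ c ∈ range m, cdfDist h (Hs c) (Hs (c + 1)) + cdfDist h (Hs m) (K m)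
        ≤ cdfDist h H₀ (K 0) + ∑ c ∈ range m, cdfDist h (K c) (K (c + 1)) := by
  induction m with
  | zero => exact ⟨fun _ => H₀, fun c hc => by rwa [Nat.le_zero.1 hc], by simp⟩
  | succ m ih =>
    obtain ⟨Hs, hHs, hsum⟩ := ih fun c hc => hK c (by omega)
    have hHm := hHs m le_rfl
    obtain ⟨H, hH, hbetween⟩ :=
      exists_isCoveringSetCDF_between (hK (m + 1) le_rfl) hHm.1 hHm.2.1 hHm.succ_le
    have hsplit := cdfDist_add_cdfDist_of_between (h := h) (f := Hs m) (g := H) (k := K (m + 1))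
      fun t ht => by have := hbetween t ht; omega
    have htri := cdfDist_triangle (h := h) (Hs m) (K m) (K (m + 1))
    refine ⟨fun c => if c ≤ m then Hs c else H, fun c hc => ?_, ?_⟩
    · dsimp only
      split_ifs with hcm
      · exact hHs c hcm
      · rwa [show c = m + 1 by omega]
    · have hprefix : ∑ c ∈ range m, cdfDist h (if c ≤ m then Hs c else H)
          (if c + 1 ≤ m then Hs (c + 1) else H) = ∑ c ∈ range m, cdfDist h (Hs c) (Hs (c + 1)) :=
        sum_congr rfl fun c hc => by
          rw [if_pos (by simp at hc; omega), if_pos (by simp at hc; omega)]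
      simp only [sum_range_succ, hprefix, le_refl, if_true, show ¬m + 1 ≤ m by omega, if_false]
      omega

lemma exists_isCoveringSetCDF_forall_cdfDist_le {K : ℕ → ℕ} (hs : s ≤ h) (hK : IsCDF h s K) :
    ∃ H₀, IsCoveringSetCDF h s K H₀ ∧
      ∀ H, IsCoveringSetCDF h s K H → cdfDist h H₀ K ≤ cdfDist h H K := by
  classical
  obtain ⟨H, hH, -⟩ := exists_isCoveringSetCDF_between (P := fun t => min t s) hK (by simp)
    (by simp [hs]) fun t _ => by omega
  have hex : ∃ n, ∃ H, IsCoveringSetCDF h s K H ∧ cdfDist h H K = n := ⟨_, H, hH, rfl⟩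
  obtain ⟨H₀, hH₀, hn⟩ := Nat.find_spec hex
  exact ⟨H₀, hH₀, fun H hH => hn ▸ Nat.find_min' hex ⟨H, hH, rfl⟩⟩

/-- Starting the chain of `exists_chain_from` at whichever end is cheaper to cover makes the
boundary terms cancel. -/
theorem exists_chain (hs : s ≤ h) {n : ℕ} (hK : ∀ c < n, IsCDF h s (K c)) :
    ∃ Hs : ℕ → ℕ → ℕ, (∀ c < n, IsCoveringSetCDF h s (K c) (Hs c)) ∧
      ∑ c ∈ range (n - 1), cdfDist h (Hs c) (Hs (c + 1))
        ≤ ∑ c ∈ range (n - 1), cdfDist h (K c) (K (c + 1)) := by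
  obtain _ | m := n
  · exact ⟨fun _ => id, by simp, by simp⟩
  rw [Nat.add_sub_cancel]
  replace hK : ∀ c ≤ m, IsCDF h s (K c) := fun c hc => hK c (by omega)
  obtain ⟨H₀, hH₀, hmin₀⟩ := exists_isCoveringSetCDF_forall_cdfDist_le hs (hK 0 (Nat.zero_le m))
  obtain ⟨H₁, hH₁, hmin₁⟩ := exists_isCoveringSetCDF_forall_cdfDist_le hs (hK m le_rfl)
  rcases le_total (cdfDist h H₀ (K 0)) (cdfDist h H₁ (K m)) with hle | hle
  · obtain ⟨Hs, hHs, hsum⟩ := exists_chain_from hK hH₀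
    have := hmin₁ _ (hHs m le_rfl)
    exact ⟨Hs, fun c hc => hHs c (by omega), by omega⟩
  · obtain ⟨Hs, hHs, hsum⟩ := exists_chain_from (K := fun c => K (m - c))
      (fun c _ => hK _ (Nat.sub_le m c)) (by simpa using hH₁)
    have := hmin₀ _ (by simpa using hHs m le_rfl)
    refine ⟨fun c => Hs (m - c), fun c hc => ?_, ?_⟩
    · simpa [Nat.sub_sub_self (by omega : c ≤ m)] using hHs (m - c) (Nat.sub_le m c)
    · rw [sum_cdfDist_reflect Hs, ← sum_cdfDist_reflect K]
      simp only [Nat.sub_self, Nat.sub_zero] at hsum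
      omega

end Chain

section Realization

variable {h s : ℕ} {K H : ℕ → ℕ}

def jumpSet (h : ℕ) (H : ℕ → ℕ) : Finset ℕ := {t ∈ range h | H t < H (t + 1)}

lemma jumpSet_subset_range (h : ℕ) (H : ℕ → ℕ) : jumpSet h H ⊆ range h := filter_subset _ _

lemma countBelow_jumpSet (hH : IsCoveringSetCDF h s K H) {t : ℕ} (ht : t ≤ h) :
    countBelow (jumpSet h H) t = H t := by
  induction t with
  | zero => simp [hH.1]
  | succ t ih =>
    rw [countBelow_succ, ih (by omega)]
    simp only [jumpSet, mem_filter, mem_range]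
    rcases hH.2.2 t ht with h' | h' <;> split_ifs <;> omega

lemma card_jumpSet (hH : IsCoveringSetCDF h s K H) : #(jumpSet h H) = s := by
  rw [← countBelow_of_subset_range (jumpSet_subset_range h H) le_rfl, countBelow_jumpSet hH le_rfl,
    hH.2.1]

lemma union_subset_jumpSet {A B : Finset ℕ} (hA : A ⊆ range h) (hB : B ⊆ range h)
    (hH : IsCoveringSetCDF h s (countBelow A + countBelow B) H) : A ∪ B ⊆ jumpSet h H := by
  intro t ht
  have hth : t < h := mem_range.1 (union_subset hA hB ht)
  have hjump : countBelow A t + countBelow B t < countBelow A (t + 1) + countBelow B (t + 1) := by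
    have : countBelow A t ≤ countBelow A (t + 1) := countBelow_mono A (by omega)
    have : countBelow B t ≤ countBelow B (t + 1) := countBelow_mono B (by omega)
    rcases mem_union.1 ht with htA | htB
    · have := countBelow_lt_succ_of_mem htA; omega
    · have := countBelow_lt_succ_of_mem htB; omega
  simp only [jumpSet, mem_filter, mem_range]
  rcases hH.2.2 t hth with h' | h'
  · omega
  · simp only [Pi.add_apply] at h'; omega

lemma isCDF_countBelow_add {A B : Finset ℕ} (hA : A ⊆ range h) (hB : B ⊆ range h) :
    IsCDF h (#A + #B) (countBelow A + countBelow B) :=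
  ⟨(countBelow_mono A).add (countBelow_mono B),
    by simp [countBelow_of_subset_range hA le_rfl, countBelow_of_subset_range hB le_rfl]⟩

end Realization

section Grid

variable {h w s : ℕ}

def gridOfCols (h w : ℕ) (T : ℕ → Finset ℕ) : Finset (Fin h × Fin w) := {q | (q.1 : ℕ) ∈ T q.2}

lemma colSupp_subset_range (Ω : Finset (Fin h × Fin w)) (c : ℕ) : colSupp Ω c ⊆ range h := by
  intro r hr
  obtain ⟨q, -, rfl⟩ := mem_image.1 hr
  exact mem_range.2 q.1.isLt

lemma mem_colSupp {Ω : Finset (Fin h × Fin w)} {q : Fin h × Fin w} (hq : q ∈ Ω) :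
    (q.1 : ℕ) ∈ colSupp Ω q.2 :=
  mem_image.2 ⟨q, mem_filter.2 ⟨hq, rfl⟩, rfl⟩

lemma colSupp_gridOfCols {T : ℕ → Finset ℕ} {c : ℕ} (hT : T c ⊆ range h) (hc : c < w) :
    colSupp (gridOfCols h w T) c = T c := by
  ext r
  simp only [colSupp, gridOfCols, mem_image, mem_filter, mem_univ, true_and]
  constructor
  · rintro ⟨q, ⟨hq, rfl⟩, rfl⟩
    exact hq
  · intro hr
    exact ⟨(⟨r, mem_range.1 (hT hr)⟩, ⟨c, hc⟩), ⟨hr, rfl⟩, rfl⟩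

lemma suppEMD_eq_sum_cdfDist {Ω : Finset (Fin h × Fin w)} (hΩ : ∀ c < w, #(colSupp Ω c) = s) :
    suppEMD Ω = ∑ c ∈ range (w - 1),
      cdfDist h (countBelow (colSupp Ω c)) (countBelow (colSupp Ω (c + 1))) :=
  sum_congr rfl fun c hc => by
    have hc := mem_range.1 hc
    exact natEMD_eq_cdfDist (colSupp_subset_range Ω c) (colSupp_subset_range Ω (c + 1))
      (by rw [hΩ c (by omega), hΩ (c + 1) (by omega)])

lemma gridOfCols_jumpSet_mem_cemdModel {K Hs : ℕ → ℕ → ℕ} {B : ℕ}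
    (hHs : ∀ c < w, IsCoveringSetCDF h s (K c) (Hs c))
    (hB : ∑ c ∈ range (w - 1), cdfDist h (Hs c) (Hs (c + 1)) ≤ B) :
    gridOfCols h w (fun c => jumpSet h (Hs c)) ∈ cemdModel h w s B := by
  have hcol : ∀ c < w, colSupp (gridOfCols h w fun c => jumpSet h (Hs c)) c = jumpSet h (Hs c) :=
    fun c hc => colSupp_gridOfCols (jumpSet_subset_range h (Hs c)) hc
  have hcard : ∀ c < w, #(colSupp (gridOfCols h w fun c => jumpSet h (Hs c)) c) = s :=
    fun c hc => by rw [hcol c hc, card_jumpSet (hHs c hc)]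
  refine ⟨hcard, le_of_eq_of_le ?_ hB⟩
  rw [suppEMD_eq_sum_cdfDist hcard]
  refine sum_congr rfl fun c hc => ?_
  have hc := mem_range.1 hc
  rw [hcol c (by omega), hcol (c + 1) (by omega)]
  exact cdfDist_congr (fun t => countBelow_jumpSet (hHs c (by omega)))
    (fun t => countBelow_jumpSet (hHs (c + 1) (by omega)))

end Grid

end SupportEMD

open SupportEMD in
theorem stmt10_general (h w k₁ k₂ B₁ B₂ : ℕ) (hd₁ : w ∣ k₁)
    (hh : (k₁ + k₂) / w ≤ h)
    (Ω₁ Ω₂ : Finset (Fin h × Fin w))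
    (hΩ₁ : Ω₁ ∈ cemdModel h w (k₁ / w) B₁)
    (hΩ₂ : Ω₂ ∈ cemdModel h w (k₂ / w) B₂) :
    ∃ Γ ∈ cemdModel h w ((k₁ + k₂) / w) (B₁ + B₂), Ω₁ ∪ Ω₂ ⊆ Γ := by
  obtain ⟨hcol₁, hemd₁⟩ := hΩ₁
  obtain ⟨hcol₂, hemd₂⟩ := hΩ₂
  set K : ℕ → ℕ → ℕ := fun c => countBelow (colSupp Ω₁ c) + countBelow (colSupp Ω₂ c)
  have hK : ∀ c < w, IsCDF h ((k₁ + k₂) / w) (K c) := fun c hc => by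
    rw [Nat.add_div_of_dvd_right hd₁, ← hcol₁ c hc, ← hcol₂ c hc]
    exact isCDF_countBelow_add (colSupp_subset_range Ω₁ c) (colSupp_subset_range Ω₂ c)
  obtain ⟨Hs, hHs, hsum⟩ := exists_chain hh hK
  refine ⟨_, gridOfCols_jumpSet_mem_cemdModel hHs (hsum.trans ?_), fun q hq => ?_⟩
  · calc ∑ c ∈ range (w - 1), cdfDist h (K c) (K (c + 1))
        ≤ suppEMD Ω₁ + suppEMD Ω₂ := by
          rw [suppEMD_eq_sum_cdfDist hcol₁, suppEMD_eq_sum_cdfDist hcol₂, ← sum_add_distrib]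
          exact sum_le_sum fun c _ => cdfDist_add_le _ _ _ _
      _ ≤ B₁ + B₂ := add_le_add hemd₁ hemd₂
  · have hq' := mem_union.2 ((mem_union.1 hq).imp mem_colSupp mem_colSupp)
    simpa [gridOfCols] using union_subset_jumpSet (colSupp_subset_range Ω₁ q.2)
      (colSupp_subset_range Ω₂ q.2) (hHs q.2 q.2.isLt) hq'

theorem stmt10 (h w k₁ k₂ B₁ B₂ : ℕ) (hd₁ : w ∣ k₁) (hd₂ : w ∣ k₂)
    (hh : (k₁ + k₂) / w ≤ h)
    (Ω₁ Ω₂ : Finset (Fin h × Fin w))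
    (hΩ₁ : Ω₁ ∈ cemdModel h w (k₁ / w) B₁)
    (hΩ₂ : Ω₂ ∈ cemdModel h w (k₂ / w) B₂) :
    ∃ Γ ∈ cemdModel h w ((k₁ + k₂) / w) (B₁ + B₂), Ω₁ ∪ Ω₂ ⊆ Γ :=
  stmt10_general h w k₁ k₂ B₁ B₂ hd₁ hh Ω₁ Ω₂ hΩ₁ hΩ₂
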